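/- Let v_1, …, v_m ∈ ℝⁿ and real numbers λ_1, …, λ_m satisfy λ_1 ≠ 1, λ_2 ≠ λ_1, λ_2 ≠ 0, v_2 ≠ 0, and |λ_2| > |λ_i| for all i ≥ 3. Let c_1, …, c_m ∈ ℝ with c_2 ≠ 0, set E_k = Σ_{i=1}^m c_i·λ_i^k·v_i, and define E_k^{(2)} = E_k + (E_{k+1} − E_k)/(1 − λ_1). Then the sequence of Euclidean norm ratios ‖E_{k+1}^{(2)}‖/‖E_k^{(2)}‖ converges to |λ_2| as k → ∞. -/

import Mathlib

/-!
The Aitken correction multiplies each mode `(c i * lam i ^ k) • v i` by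
`(lam i - lam 0) / (1 - lam 0)`, so `E2` is again a sum of geometric modes, with the `lam 0` mode
annihilated. The `lam 1` mode then dominates: `(lam 1 ^ k)⁻¹ • E2 k` converges to a nonzero vector,
and the norm ratios of a sequence `r ^ k • y k` with `y k → y ≠ 0` tend to `‖r‖`.
-/

open Filter Topology

theorem aitken_sum_pow_smul {𝕜 E ι : Type*} [Field 𝕜] [AddCommGroup E] [Module 𝕜 E]
    (s : Finset ι) (c μ : ι → 𝕜) (w : ι → E) {a : 𝕜} (ha : a ≠ 1) (k : ℕ) :
    ∑ i ∈ s, (c i * μ i ^ k) • w i +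
        (1 - a)⁻¹ • (∑ i ∈ s, (c i * μ i ^ (k + 1)) • w i - ∑ i ∈ s, (c i * μ i ^ k) • w i) =
      ∑ i ∈ s, (c i * (μ i - a) / (1 - a) * μ i ^ k) • w i := by
  have h1a : (1 : 𝕜) - a ≠ 0 := sub_ne_zero.mpr ha.symm
  rw [← Finset.sum_sub_distrib, Finset.smul_sum, ← Finset.sum_add_distrib]
  refine Finset.sum_congr rfl fun i _ => ?_
  rw [← sub_smul, smul_smul, ← add_smul]
  congr 1
  field_simp
  ring

section

variable {𝕜 E : Type*} [NormedField 𝕜] [NormedAddCommGroup E] [NormedSpace 𝕜 E]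

theorem tendsto_inv_pow_smul_sum_pow_smul {ι : Type*} [Fintype ι] [DecidableEq ι]
    (d μ : ι → 𝕜) (w : ι → E) {j : ι} (hμj : μ j ≠ 0)
    (hdom : ∀ i ≠ j, d i = 0 ∨ ‖μ i‖ < ‖μ j‖) :
    Tendsto (fun k => (μ j ^ k)⁻¹ • ∑ i, (d i * μ i ^ k) • w i) atTop (𝓝 (d j • w j)) := by
  have hterm : ∀ i, Tendsto (fun k => (d i * (μ i / μ j) ^ k) • w i) atTop
      (𝓝 (if i = j then d j • w j else 0)) := by
    intro i
    by_cases hij : i = j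
    · subst hij
      simp [div_self hμj]
    rw [if_neg hij]
    rcases hdom i hij with hd | hlt
    · simp [hd]
    have hr : ‖μ i / μ j‖ < 1 := by
      rwa [norm_div, div_lt_one (norm_pos_iff.mpr hμj)]
    simpa using ((tendsto_pow_atTop_nhds_zero_of_norm_lt_one hr).const_mul (d i)).smul_const (w i)
  have hsum := tendsto_finsetSum Finset.univ fun i _ => hterm i
  rw [Finset.sum_ite_eq' Finset.univ j, if_pos (Finset.mem_univ j)] at hsum
  refine hsum.congr fun k => ?_
  rw [Finset.smul_sum]
  refine Finset.sum_congr rfl fun i _ => ?_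
  rw [smul_smul]
  congr 1
  ring

theorem tendsto_norm_succ_div_norm_of_tendsto_inv_pow_smul {r : 𝕜} (hr : r ≠ 0)
    {x : ℕ → E} {y : E} (hy : y ≠ 0)
    (hx : Tendsto (fun k => (r ^ k)⁻¹ • x k) atTop (𝓝 y)) :
    Tendsto (fun k => ‖x (k + 1)‖ / ‖x k‖) atTop (𝓝 ‖r‖) := by
  set z := fun k => (r ^ k)⁻¹ • x k with hz
  have hr' : ‖r‖ ≠ 0 := norm_ne_zero_iff.mpr hr
  have hy' : ‖y‖ ≠ 0 := norm_ne_zero_iff.mpr hy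
  have hnorm : ∀ k, ‖x k‖ = ‖r‖ ^ k * ‖z k‖ := fun k => by
    rw [hz, norm_smul, norm_inv, norm_pow, mul_inv_cancel_left₀ (pow_ne_zero k hr')]
  have hlim := ((hx.comp (tendsto_add_atTop_nat 1)).norm.div hx.norm hy').const_mul ‖r‖
  rw [div_self hy', mul_one] at hlim
  refine hlim.congr fun k => ?_
  rw [hnorm (k + 1), hnorm k, pow_succ, mul_assoc, mul_div_mul_left _ _ (pow_ne_zero k hr'),
    mul_div_assoc]
  rfl

end

/-- Let `E k = ∑ i, (c i * lam i ^ k) • v i` with `lam 0 ≠ 1`, `lam 1 ≠ lam 0`,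
`lam 1 ≠ 0`, `v 1 ≠ 0`, `c 1 ≠ 0`, and `|lam i| < |lam 1|` for all `i > 1`
(second dominance).  Then the second-order Aitken errors
`E2 k = E k + (1 - lam 0)⁻¹ • (E (k+1) - E k)` have Euclidean norm ratios
`‖E2 (k+1)‖ / ‖E2 k‖` converging to `|lam 1|`. -/
theorem second_order_aitken_norm_ratio_tendsto_second_eigenvalue
    {n m : ℕ} (v : Fin (m + 2) → EuclideanSpace ℝ (Fin n)) (c lam : Fin (m + 2) → ℝ)
    (hlam0 : lam 0 ≠ 1) (hlam10 : lam 1 ≠ lam 0) (hlam1 : lam 1 ≠ 0)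
    (hv1 : v 1 ≠ 0) (hc1 : c 1 ≠ 0)
    (hdom : ∀ i, 1 < i → |lam i| < |lam 1|)
    (E : ℕ → EuclideanSpace ℝ (Fin n))
    (hE : ∀ k, E k = ∑ i, (c i * lam i ^ k) • v i)
    (E2 : ℕ → EuclideanSpace ℝ (Fin n))
    (hE2 : ∀ k, E2 k = E k + (1 - lam 0)⁻¹ • (E (k + 1) - E k)) :
    Tendsto (fun k => ‖E2 (k + 1)‖ / ‖E2 k‖) atTop (𝓝 |lam 1|) := by
  let d : Fin (m + 2) → ℝ := fun i => c i * (lam i - lam 0) / (1 - lam 0)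
  have hE2d : ∀ k, E2 k = ∑ i, (d i * lam i ^ k) • v i := fun k => by
    rw [hE2, hE, hE, aitken_sum_pow_smul _ _ _ _ hlam0]
  have hd1 : d 1 ≠ 0 :=
    div_ne_zero (mul_ne_zero hc1 (sub_ne_zero.mpr hlam10)) (sub_ne_zero.mpr hlam0.symm)
  have hdom' : ∀ i ≠ 1, d i = 0 ∨ ‖lam i‖ < ‖lam 1‖ := by
    intro i hi1
    by_cases hi0 : i = 0
    · left
      simp [d, hi0]
    · right
      simp only [Real.norm_eq_abs]
      refine hdom i ?_
      rw [Fin.lt_def, Fin.val_one]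
      have h0 : i.val ≠ 0 := fun h => hi0 (Fin.ext h)
      have h1 : i.val ≠ 1 := fun h => hi1 (Fin.ext h)
      omega
  simp only [hE2d]
  simpa only [Real.norm_eq_abs] using
    tendsto_norm_succ_div_norm_of_tendsto_inv_pow_smul hlam1 (smul_ne_zero hd1 hv1)
      (tendsto_inv_pow_smul_sum_pow_smul d lam v hlam1 hdom')
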